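/- There is a constant c > 0 such that for every n ≥ 1 there exists an LTLf formula φ_n over the propositions Prop = {0, 1, #, &} with |φ_n| ≤ c·n² whose language is exactly the encoding of F_n ⊎ {0,1,#}^*: a nonempty finite trace ρ ∈ (2^Prop)^+ satisfies φ_n if and only if every letter of ρ makes exactly one proposition true and the corresponding word over the alphabet {0,1,#,&} belongs to F_n ⊎ {0,1,#}^*. -/

import Mathlib

/-- Syntax of LTLf (and LTL) formulas over atomic propositions `P`. -/
inductive LTLf (P : Type) : Type where
  | tt : LTLf P
  | ff : LTLf P
  | atom : P → LTLf P
  | not : LTLf P → LTLf P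
  | and : LTLf P → LTLf P → LTLf P
  | next : LTLf P → LTLf P
  | untl : LTLf P → LTLf P → LTLf P

/-- LTLf satisfaction at position `i` of a finite trace `ρ` over `2^P`. -/
def LTLf.SatAt {P : Type} : LTLf P → List (Set P) → ℕ → Prop
  | .tt, _, _ => True
  | .ff, _, _ => False
  | .atom a, ρ, i => a ∈ ρ.getD i ∅
  | .not φ, ρ, i => ¬ LTLf.SatAt φ ρ i
  | .and φ ψ, ρ, i => LTLf.SatAt φ ρ i ∧ LTLf.SatAt ψ ρ i
  | .next φ, ρ, i => i + 1 < ρ.length ∧ LTLf.SatAt φ ρ (i + 1)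
  | .untl φ ψ, ρ, i => ∃ j, i ≤ j ∧ j < ρ.length ∧ LTLf.SatAt ψ ρ j ∧
      ∀ k, i ≤ k → k < j → LTLf.SatAt φ ρ k

/-- `ρ ⊨ φ` means `ρ, 0 ⊨ φ` (intended for nonempty finite traces). -/
def LTLf.Sat {P : Type} (φ : LTLf P) (ρ : List (Set P)) : Prop :=
  LTLf.SatAt φ ρ 0

/-- The length-`n` prefix `w_0 ⋯ w_{n-1}` of an infinite word `w`. -/
def prefixWord {α : Type} (w : ℕ → α) (n : ℕ) : List α :=
  (List.range n).map w

/-- The prefix language of an LTLf formula: all infinite words every nonempty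
finite prefix of which satisfies `φ`. -/
def pref {P : Type} (φ : LTLf P) : Set (ℕ → Set P) :=
  { w | ∀ n : ℕ, 0 < n → LTLf.Sat φ (prefixWord w n) }

/-- The size (number of operators) of an LTLf formula. -/
def LTLf.size {P : Type} : LTLf P → ℕ
  | .tt => 1
  | .ff => 1
  | .atom _ => 1
  | .not φ => φ.size + 1
  | .and φ ψ => φ.size + ψ.size + 1
  | .next φ => φ.size + 1
  | .untl φ ψ => φ.size + ψ.size + 1

/-- Concatenation of a finite word `u` with an infinite word `v`. -/
def wcat {α : Type} (u : List α) (v : ℕ → α) : ℕ → α :=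
  fun i => if h : i < u.length then u.get ⟨i, h⟩ else v (i - u.length)

/-- The four-letter alphabet Σ = {0, 1, #, &}. -/
inductive Sig4 : Type where
  | zero : Sig4
  | one : Sig4
  | hash : Sig4
  | amp : Sig4
deriving DecidableEq

/-- Encoding of a bit as a letter in {0,1}. -/
def bitSym (b : Bool) : Sig4 := if b then Sig4.one else Sig4.zero

/-- The block `#w#` for a bit-string `w`. -/
def blk (w : List Bool) : List Sig4 :=
  Sig4.hash :: (w.map bitSym ++ [Sig4.hash])

/-- A finite word contains no occurrence of `&`. -/
def NoAmpL (u : List Sig4) : Prop := ∀ a ∈ u, a ≠ Sig4.amp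

/-- An infinite word contains no occurrence of `&`. -/
def NoAmpW (v : ℕ → Sig4) : Prop := ∀ i, v i ≠ Sig4.amp

/-- The finite word `p` occurs as a factor of the infinite word `v`. -/
def OccursInW (p : List Sig4) (v : ℕ → Sig4) : Prop :=
  ∃ i, prefixWord (fun j => v (i + j)) p.length = p

/-- The ω-language `L_n`: words `u · & · v` with `u ∈ {0,1,#}^*`, `v ∈ {0,1,#}^ω`
such that every block `#w#` (with `w ∈ {0,1}^n`) occurring in `v` also occurs in `u`. -/
def Ln (n : ℕ) : Set (ℕ → Sig4) :=
  { x | ∃ (u : List Sig4) (v : ℕ → Sig4), NoAmpL u ∧ NoAmpW v ∧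
      x = wcat (u ++ [Sig4.amp]) v ∧
      ∀ w : List Bool, w.length = n → OccursInW (blk w) v → blk w <:+: u }

/-- The language of finite words `F_n`: words `u · & · v` with `u, v ∈ {0,1,#}^*`
such that if the last `n+2` letters of `v` form a block `#w#` with `w ∈ {0,1}^n`,
then `#w#` occurs in `u`. -/
def Fn (n : ℕ) : Set (List Sig4) :=
  { x | ∃ u v : List Sig4, NoAmpL u ∧ NoAmpL v ∧
      x = u ++ Sig4.amp :: v ∧
      ∀ w : List Bool, w.length = n → blk w <:+ v → blk w <:+: u }

namespace FnProof
open LTLf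

abbrev σ : Sig4 → Set Sig4 := fun a => ({a} : Set Sig4)

/-! ### Derived operators -/

def evF (φ : LTLf Sig4) : LTLf Sig4 := .untl .tt φ
def alwF (φ : LTLf Sig4) : LTLf Sig4 := .not (evF (.not φ))
def orF (φ ψ : LTLf Sig4) : LTLf Sig4 := .not (.and (.not φ) (.not ψ))
def impF (φ ψ : LTLf Sig4) : LTLf Sig4 := orF (.not φ) ψ
def xn : ℕ → LTLf Sig4 → LTLf Sig4
  | 0, φ => φ
  | k+1, φ => .next (xn k φ)
def lastF : LTLf Sig4 := .not (.next .tt)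
def andl : List (LTLf Sig4) → LTLf Sig4
  | [] => .tt
  | φ :: l => .and φ (andl l)

def aZ : LTLf Sig4 := .atom .zero
def aO : LTLf Sig4 := .atom .one
def aH : LTLf Sig4 := .atom .hash
def aA : LTLf Sig4 := .atom .amp

def only3 (a b c d : Sig4) : LTLf Sig4 :=
  .and (.atom a) (.and (.not (.atom b)) (.and (.not (.atom c)) (.not (.atom d))))

def exactOne : LTLf Sig4 :=
  orF (only3 .zero .one .hash .amp) (orF (only3 .one .zero .hash .amp)
    (orF (only3 .hash .zero .one .amp) (only3 .amp .zero .one .hash)))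

def eb (n i : ℕ) : LTLf Sig4 := evF (.and aO (xn (n - i) lastF))
def mBit (n i : ℕ) : LTLf Sig4 :=
  xn (1+i) (orF (.and aO (eb n i)) (.and aZ (.not (eb n i))))
def bitF : LTLf Sig4 := orF aZ aO
def endsB (n : ℕ) : LTLf Sig4 :=
  evF (.and aH (.and (andl ((List.range n).map fun i => xn (1+i) bitF))
    (xn (n+1) (.and aH lastF))))
def mF (n : ℕ) : LTLf Sig4 :=
  evF (.and aH (.and (xn (n+1) (.and aH (.next (evF aA))))
    (andl ((List.range n).map (mBit n)))))
def atMostOne : LTLf Sig4 := .not (evF (.and aA (.next (evF aA))))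
def phi (n : ℕ) : LTLf Sig4 :=
  .and (alwF exactOne) (.and atMostOne
    (impF (.and (evF aA) (endsB n)) (mF n)))

/-! ### Size bounds -/

lemma size_xn (k : ℕ) (φ : LTLf Sig4) : (xn k φ).size = φ.size + k := by
  induction k with
  | zero => rfl
  | succ k ih => simp [xn, LTLf.size, ih]; omega

lemma size_andl_le {K : ℕ} {l : List (LTLf Sig4)} (h : ∀ φ ∈ l, φ.size ≤ K) :
    (andl l).size ≤ (K+1) * l.length + 1 := by
  induction l with
  | nil => simp [andl, LTLf.size]
  | cons φ l ih =>
    have h1 := h φ (by simp)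
    have h2 := ih (fun ψ hψ => h ψ (by simp [hψ]))
    simp only [andl, LTLf.size, List.length_cons]
    nlinarith

lemma size_phi_le {n : ℕ} (hn : 1 ≤ n) : (phi n).size ≤ 200 * n ^ 2 := by
  have hbit : (andl ((List.range n).map fun i => xn (1+i) bitF)).size ≤ (n+7+1)*n+1 := by
    have h := size_andl_le (K := n+7) (l := (List.range n).map fun i => xn (1+i) bitF) ?_
    · simpa using h
    rintro φ hφ
    simp only [List.mem_map, List.mem_range] at hφ
    obtain ⟨i, hi, rfl⟩ := hφ
    simp [size_xn, bitF, orF, aZ, aO, LTLf.size]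
    omega
  have hmb : (andl ((List.range n).map (mBit n))).size ≤ (3*n+23+1)*n+1 := by
    have h := size_andl_le (K := 3*n+23) (l := (List.range n).map (mBit n)) ?_
    · simpa using h
    rintro φ hφ
    simp only [List.mem_map, List.mem_range] at hφ
    obtain ⟨i, hi, rfl⟩ := hφ
    simp [mBit, size_xn, orF, eb, evF, aZ, aO, lastF, LTLf.size]
    omega
  simp only [phi, alwF, atMostOne, impF, orF, evF, endsB, mF, exactOne, only3,
    aZ, aO, aH, aA, lastF, LTLf.size, size_xn]
  nlinarith [hbit, hmb, sq_nonneg n, hn]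

end FnProof

namespace FnProof
open LTLf

/-! ### General semantic lemmas -/

lemma lt_of_some {α : Type} {x : List α} {i : ℕ} {a : α} (h : x[i]? = some a) :
    i < x.length := by
  obtain ⟨h1, -⟩ := List.getElem?_eq_some_iff.mp h
  exact h1

lemma sat_ev {φ : LTLf Sig4} {ρ : List (Set Sig4)} {i : ℕ} :
    SatAt (evF φ) ρ i ↔ ∃ j, i ≤ j ∧ j < ρ.length ∧ SatAt φ ρ j := by
  simp [evF, LTLf.SatAt]

lemma sat_alw {φ : LTLf Sig4} {ρ : List (Set Sig4)} {i : ℕ} :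
    SatAt (alwF φ) ρ i ↔ ∀ j, i ≤ j → j < ρ.length → SatAt φ ρ j := by
  simp only [alwF, LTLf.SatAt, sat_ev]
  push_neg
  simp

lemma sat_or {φ ψ : LTLf Sig4} {ρ : List (Set Sig4)} {i : ℕ} :
    SatAt (orF φ ψ) ρ i ↔ SatAt φ ρ i ∨ SatAt ψ ρ i := by
  simp only [orF, LTLf.SatAt]; tauto

lemma sat_imp {φ ψ : LTLf Sig4} {ρ : List (Set Sig4)} {i : ℕ} :
    SatAt (impF φ ψ) ρ i ↔ (SatAt φ ρ i → SatAt ψ ρ i) := by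
  simp only [impF, orF, LTLf.SatAt]; tauto

lemma sat_xn {k : ℕ} (hk : 0 < k) {φ : LTLf Sig4} {ρ : List (Set Sig4)} {i : ℕ} :
    SatAt (xn k φ) ρ i ↔ i + k < ρ.length ∧ SatAt φ ρ (i + k) := by
  induction k generalizing i with
  | zero => omega
  | succ k ih =>
    rcases Nat.eq_zero_or_pos k with h0 | hpos
    · subst h0; simp [xn, LTLf.SatAt]
    · show SatAt (.next (xn k φ)) ρ i ↔ _
      simp only [LTLf.SatAt, ih hpos]
      have e : i + 1 + k = i + (k + 1) := by omega
      rw [e]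
      constructor
      · rintro ⟨-, h⟩; exact h
      · rintro ⟨h1, h2⟩; exact ⟨by omega, h1, h2⟩

lemma sat_last {ρ : List (Set Sig4)} {i : ℕ} :
    SatAt lastF ρ i ↔ ρ.length ≤ i + 1 := by
  simp [lastF, LTLf.SatAt]

lemma sat_andl {l : List (LTLf Sig4)} {ρ : List (Set Sig4)} {i : ℕ} :
    SatAt (andl l) ρ i ↔ ∀ φ ∈ l, SatAt φ ρ i := by
  induction l with
  | nil => simp [andl, LTLf.SatAt]
  | cons φ l ih => simp [andl, LTLf.SatAt, ih]

/-! ### Semantics on encoded traces -/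

lemma mem_enc {x : List Sig4} {a : Sig4} {i : ℕ} :
    a ∈ (x.map σ).getD i ∅ ↔ x[i]? = some a := by
  rw [List.getD_eq_getElem?_getD, List.getElem?_map]
  cases h : x[i]? with
  | none => simp
  | some b => simp [σ, eq_comm]

lemma sat_atom {x : List Sig4} {a : Sig4} {i : ℕ} :
    SatAt (.atom a) (x.map σ) i ↔ x[i]? = some a := by
  show a ∈ (x.map σ).getD i ∅ ↔ _
  rw [List.getD_eq_getElem?_getD, List.getElem?_map]
  cases h : x[i]? with
  | none => simp
  | some b => simp [σ, eq_comm]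

lemma sat_aZ {x : List Sig4} {i : ℕ} :
    SatAt aZ (x.map σ) i ↔ x[i]? = some Sig4.zero := sat_atom
lemma sat_aO {x : List Sig4} {i : ℕ} :
    SatAt aO (x.map σ) i ↔ x[i]? = some Sig4.one := sat_atom
lemma sat_aH {x : List Sig4} {i : ℕ} :
    SatAt aH (x.map σ) i ↔ x[i]? = some Sig4.hash := sat_atom
lemma sat_aA {x : List Sig4} {i : ℕ} :
    SatAt aA (x.map σ) i ↔ x[i]? = some Sig4.amp := sat_atom

/-! ### exactOne -/

lemma sat_exactOne {ρ : List (Set Sig4)} {i : ℕ} :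
    SatAt exactOne ρ i ↔ ∃ a, ρ.getD i ∅ = {a} := by
  rw [exactOne, sat_or, sat_or, sat_or]
  simp only [only3, LTLf.SatAt]
  constructor
  · rintro (⟨h1, h2, h3, h4⟩ | ⟨h1, h2, h3, h4⟩ | ⟨h1, h2, h3, h4⟩ | ⟨h1, h2, h3, h4⟩)
    · exact ⟨.zero, by ext b; cases b <;> simp_all⟩
    · exact ⟨.one, by ext b; cases b <;> simp_all⟩
    · exact ⟨.hash, by ext b; cases b <;> simp_all⟩
    · exact ⟨.amp, by ext b; cases b <;> simp_all⟩
  · rintro ⟨a, ha⟩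
    rw [ha]
    cases a
    · exact Or.inl (by simp)
    · exact Or.inr (Or.inl (by simp))
    · exact Or.inr (Or.inr (Or.inl (by simp)))
    · exact Or.inr (Or.inr (Or.inr (by simp)))

instance : Nonempty Sig4 := ⟨.zero⟩

noncomputable def pick (s : Set Sig4) : Sig4 := Classical.epsilon (· ∈ s)

lemma pick_singleton (a : Sig4) : pick {a} = a :=
  Set.eq_of_mem_singleton (Classical.epsilon_spec (p := (· ∈ ({a} : Set Sig4))) ⟨a, rfl⟩)

lemma encode_exists {ρ : List (Set Sig4)} (h : SatAt (alwF exactOne) ρ 0) :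
    ∃ x : List Sig4, ρ = x.map σ := by
  rw [sat_alw] at h
  refine ⟨ρ.map pick, ?_⟩
  rw [List.map_map]
  apply List.ext_getElem?
  intro m
  rw [List.getElem?_map]
  cases hm : ρ[m]? with
  | none => simp
  | some s =>
    have hlt : m < ρ.length := lt_of_some hm
    have he := (sat_exactOne).mp (h m (by omega) hlt)
    obtain ⟨a, ha⟩ := he
    have hs : s = {a} := by
      rw [List.getD_eq_getElem?_getD, hm] at ha
      simpa using ha
    simp only [Option.map_some, Function.comp]
    rw [hs, pick_singleton]

lemma alw_exactOne_enc (x : List Sig4) : SatAt (alwF exactOne) (x.map σ) 0 := by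
  rw [sat_alw]
  intro j _ hj
  rw [sat_exactOne]
  rw [List.length_map] at hj
  refine ⟨x[j], ?_⟩
  rw [List.getD_eq_getElem?_getD, List.getElem?_map, List.getElem?_eq_getElem hj]
  rfl

end FnProof

namespace FnProof
open LTLf

def P1 (x : List Sig4) : Prop :=
  ∀ j k : ℕ, j < k → x[j]? = some Sig4.amp → x[k]? ≠ some Sig4.amp
def HasA (x : List Sig4) : Prop := ∃ p : ℕ, x[p]? = some Sig4.amp
def P3 (n : ℕ) (x : List Sig4) : Prop :=
  n + 2 ≤ x.length ∧ x[x.length - (n+2)]? = some Sig4.hash ∧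
  x[x.length - 1]? = some Sig4.hash ∧
  ∀ i < n, x[x.length - (n+2) + (1+i)]? = some Sig4.zero ∨
    x[x.length - (n+2) + (1+i)]? = some Sig4.one
def P4 (n : ℕ) (x : List Sig4) : Prop :=
  ∃ j : ℕ, x[j]? = some Sig4.hash ∧ x[j + (n+1)]? = some Sig4.hash ∧
    (∃ p : ℕ, j + (n+1) < p ∧ x[p]? = some Sig4.amp) ∧
    ∀ i < n, (x[j + (1+i)]? = some Sig4.one ∧
        x[x.length - (n+2) + (1+i)]? = some Sig4.one) ∨
      (x[j + (1+i)]? = some Sig4.zero ∧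
        x[x.length - (n+2) + (1+i)]? ≠ some Sig4.one)
def Q (n : ℕ) (x : List Sig4) : Prop :=
  P1 x ∧ (HasA x → P3 n x → P4 n x)

lemma sat_atMostOne {x : List Sig4} :
    SatAt atMostOne (x.map σ) 0 ↔ P1 x := by
  rw [atMostOne]
  show ¬ SatAt (evF _) _ _ ↔ _
  rw [sat_ev]
  simp only [LTLf.SatAt, aA, evF, mem_enc, List.length_map, implies_true, and_true]
  constructor
  · intro h j k hjk hj hk
    have hkL : k < x.length := lt_of_some hk
    exact h ⟨j, by omega, by omega, hj, by omega, k, by omega, by omega, hk⟩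
  · rintro h ⟨j, -, -, hj, -, k, hk1, -, hk⟩
    exact h j k (by omega) hj hk

lemma sat_hasAmp {x : List Sig4} :
    SatAt (evF aA) (x.map σ) 0 ↔ HasA x := by
  rw [sat_ev]
  constructor
  · rintro ⟨j, -, -, hj⟩; exact ⟨j, sat_aA.mp hj⟩
  · rintro ⟨p, hp⟩
    exact ⟨p, by omega, by simp only [List.length_map]; exact lt_of_some hp,
      sat_aA.mpr hp⟩

lemma sat_endsB {n : ℕ} {x : List Sig4} :
    SatAt (endsB n) (x.map σ) 0 ↔ P3 n x := by
  rw [endsB, sat_ev]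
  constructor
  · rintro ⟨s, -, -, hs1, hs2, hs3⟩
    rw [sat_xn (by omega)] at hs3
    obtain ⟨hlen, hs4, hs5⟩ := hs3
    rw [sat_last] at hs5
    rw [List.length_map] at hlen hs5
    have hL : x.length = s + (n + 2) := by omega
    have hsa : s = x.length - (n+2) := by omega
    refine ⟨by omega, by rw [← hsa]; exact sat_aH.mp hs1, ?_, ?_⟩
    · have : x.length - 1 = s + (n+1) := by omega
      rw [this]; exact sat_aH.mp hs4
    · intro i hi
      rw [sat_andl] at hs2
      have hmem : xn (1+i) bitF ∈ (List.range n).map fun i => xn (1+i) bitF :=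
        List.mem_map.mpr ⟨i, List.mem_range.mpr hi, rfl⟩
      have := hs2 _ hmem
      rw [sat_xn (by omega)] at this
      obtain ⟨-, hb⟩ := this
      rw [bitF, sat_or] at hb
      rw [← hsa]
      rcases hb with hb | hb
      · exact Or.inl (sat_aZ.mp hb)
      · exact Or.inr (sat_aO.mp hb)
  · rintro ⟨hlen, h1, h2, h3⟩
    refine ⟨x.length - (n+2), by omega, by simp only [List.length_map]; omega,
      sat_aH.mpr h1, ?_, ?_⟩
    · rw [sat_andl]
      rintro φ hφ
      rw [List.mem_map] at hφ
      obtain ⟨i, hi, rfl⟩ := hφ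
      rw [List.mem_range] at hi
      rw [sat_xn (by omega)]
      refine ⟨by simp only [List.length_map]; omega, ?_⟩
      rw [bitF, sat_or]
      rcases h3 i hi with hb | hb
      · exact Or.inl (sat_aZ.mpr hb)
      · exact Or.inr (sat_aO.mpr hb)
    · rw [sat_xn (by omega)]
      refine ⟨by simp only [List.length_map]; omega, ?_, ?_⟩
      · apply sat_aH.mpr
        have : x.length - (n+2) + (n+1) = x.length - 1 := by omega
        rw [this]; exact h2
      · rw [sat_last, List.length_map]; omega

lemma sat_eb {n i : ℕ} (hi : i < n) {x : List Sig4} {q : ℕ} :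
    SatAt (eb n i) (x.map σ) q ↔
      ∃ r, q ≤ r ∧ x[r]? = some Sig4.one ∧ r + (n - i) + 1 = x.length := by
  rw [eb, sat_ev]
  constructor
  · rintro ⟨r, hqr, -, h1, h2⟩
    rw [sat_xn (by omega)] at h2
    obtain ⟨h3, h4⟩ := h2
    rw [sat_last] at h4
    rw [List.length_map] at h3 h4
    exact ⟨r, hqr, sat_aO.mp h1, by omega⟩
  · rintro ⟨r, hqr, h1, h2⟩
    refine ⟨r, hqr, by simp only [List.length_map]; omega, sat_aO.mpr h1, ?_⟩
    rw [sat_xn (by omega)]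
    refine ⟨by simp only [List.length_map]; omega, ?_⟩
    rw [sat_last, List.length_map]; omega

lemma sat_mF {n : ℕ} {x : List Sig4} (hL : n + 2 ≤ x.length) :
    SatAt (mF n) (x.map σ) 0 ↔ P4 n x := by
  rw [mF, sat_ev]
  constructor
  · rintro ⟨j, -, -, hj1, hj2, hj3⟩
    rw [sat_xn (by omega)] at hj2
    obtain ⟨-, hj4, hj5, hj6⟩ := hj2
    rw [sat_ev] at hj6
    obtain ⟨p, hp1, -, hp2⟩ := hj6
    have hp3 := sat_aA.mp hp2
    have hpx : p < x.length := lt_of_some hp3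
    refine ⟨j, sat_aH.mp hj1, sat_aH.mp hj4, ⟨p, by omega, hp3⟩, ?_⟩
    intro i hi
    rw [sat_andl] at hj3
    have hmem : mBit n i ∈ (List.range n).map (mBit n) :=
      List.mem_map.mpr ⟨i, List.mem_range.mpr hi, rfl⟩
    have hb := hj3 _ hmem
    rw [mBit, sat_xn (by omega)] at hb
    obtain ⟨-, hb⟩ := hb
    rw [sat_or] at hb
    rcases hb with ⟨hb1, hb2⟩ | ⟨hb1, hb2⟩
    · rw [sat_eb hi] at hb2
      obtain ⟨r, -, hr1, hr2⟩ := hb2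
      have : x.length - (n+2) + (1+i) = r := by omega
      rw [this]
      exact Or.inl ⟨sat_aO.mp hb1, hr1⟩
    · refine Or.inr ⟨sat_aZ.mp hb1, ?_⟩
      intro hcon
      apply hb2
      rw [sat_eb hi]
      exact ⟨x.length - (n+2) + (1+i), by omega, hcon, by omega⟩
  · rintro ⟨j, hj1, hj2, ⟨p, hp1, hp2⟩, hmatch⟩
    have hpx : p < x.length := lt_of_some hp2
    refine ⟨j, by omega, by simp only [List.length_map]; exact lt_of_some hj1,
      sat_aH.mpr hj1, ?_, ?_⟩
    · rw [sat_xn (by omega)]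
      refine ⟨by simp only [List.length_map]; omega, sat_aH.mpr hj2, ?_, ?_⟩
      · simp only [List.length_map]; omega
      · rw [sat_ev]
        exact ⟨p, by omega, by simp only [List.length_map]; omega, sat_aA.mpr hp2⟩
    · rw [sat_andl]
      rintro φ hφ
      rw [List.mem_map] at hφ
      obtain ⟨i, hi, rfl⟩ := hφ
      rw [List.mem_range] at hi
      rw [mBit, sat_xn (by omega)]
      refine ⟨by simp only [List.length_map]; omega, ?_⟩
      rw [sat_or]
      rcases hmatch i hi with ⟨hb1, hb2⟩ | ⟨hb1, hb2⟩
      · refine Or.inl ⟨sat_aO.mpr hb1, ?_⟩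
        rw [sat_eb hi]
        exact ⟨x.length - (n+2) + (1+i), by omega, hb2, by omega⟩
      · refine Or.inr ⟨sat_aZ.mpr hb1, ?_⟩
        intro hcon
        rw [sat_eb hi] at hcon
        obtain ⟨r, -, hr1, hr2⟩ := hcon
        apply hb2
        have : x.length - (n+2) + (1+i) = r := by omega
        rw [this]; exact hr1

lemma sat_phi_enc {n : ℕ} {x : List Sig4} :
    SatAt (phi n) (x.map σ) 0 ↔ Q n x := by
  have hsplit : SatAt (phi n) (x.map σ) 0 ↔
      SatAt (alwF exactOne) (x.map σ) 0 ∧ SatAt atMostOne (x.map σ) 0 ∧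
      SatAt (impF (.and (evF aA) (endsB n)) (mF n)) (x.map σ) 0 := Iff.rfl
  rw [hsplit, sat_imp]
  constructor
  · rintro ⟨-, h2, h3⟩
    refine ⟨sat_atMostOne.mp h2, ?_⟩
    intro hA h3p
    have hg : SatAt (.and (evF aA) (endsB n)) (x.map σ) 0 :=
      ⟨sat_hasAmp.mpr hA, sat_endsB.mpr h3p⟩
    exact (sat_mF h3p.1).mp (h3 hg)
  · rintro ⟨h1, h2⟩
    refine ⟨alw_exactOne_enc x, sat_atMostOne.mpr h1, ?_⟩
    rintro ⟨hA, hE⟩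
    have h3p := sat_endsB.mp hE
    exact (sat_mF h3p.1).mpr (h2 (sat_hasAmp.mp hA) h3p)

end FnProof

namespace FnProof
open LTLf

/-! ### blk and decomposition lemmas -/

lemma exists_get {α : Type} {l : List α} {i : ℕ} (h : i < l.length) :
    ∃ a, l[i]? = some a := ⟨l[i], List.getElem?_eq_getElem h⟩

lemma blk_length (w : List Bool) : (blk w).length = w.length + 2 := by
  simp [blk]

lemma blk_zero (w : List Bool) : (blk w)[0]? = some Sig4.hash := by simp [blk]

lemma blk_bit {w : List Bool} {i : ℕ} {b : Bool} (hb : w[i]? = some b) :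
    (blk w)[1+i]? = some (bitSym b) := by
  have hi : i < w.length := lt_of_some hb
  rw [blk, show 1 + i = i + 1 by omega, List.getElem?_cons_succ,
    List.getElem?_append_left (by simpa using hi), List.getElem?_map, hb]
  rfl

lemma blk_last (w : List Bool) : (blk w)[w.length+1]? = some Sig4.hash := by
  rw [blk, List.getElem?_cons_succ,
    List.getElem?_append_right (by simp), List.length_map]
  simp

lemma blk_none {w : List Bool} {i : ℕ} (hi : w.length + 2 ≤ i) :
    (blk w)[i]? = none :=
  List.getElem?_eq_none (by rw [blk_length]; omega)

lemma dec_amp (u v : List Sig4) :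
    (u ++ Sig4.amp :: v)[u.length]? = some Sig4.amp := by
  rw [List.getElem?_append_right le_rfl]
  simp

lemma dec_v (u v : List Sig4) (q : ℕ) :
    (u ++ Sig4.amp :: v)[u.length + 1 + q]? = v[q]? := by
  rw [List.getElem?_append_right (by omega),
    show u.length + 1 + q - u.length = q + 1 by omega, List.getElem?_cons_succ]

lemma amp_pos {u v : List Sig4} (hu : NoAmpL u) (hv : NoAmpL v) (p : ℕ) :
    (u ++ Sig4.amp :: v)[p]? = some Sig4.amp ↔ p = u.length := by
  constructor
  · intro h
    by_contra hne
    rcases Nat.lt_or_ge p u.length with hlt | hge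
    · rw [List.getElem?_append_left hlt] at h
      exact hu _ (List.mem_iff_getElem?.mpr ⟨p, h⟩) rfl
    · rw [List.getElem?_append_right hge,
        show p - u.length = (p - u.length - 1) + 1 by omega,
        List.getElem?_cons_succ] at h
      exact hv _ (List.mem_iff_getElem?.mpr ⟨_, h⟩) rfl
  · rintro rfl; exact dec_amp u v

/-! ### Language lemmas -/

lemma noamp_to_Q {n : ℕ} {x : List Sig4} (h : NoAmpL x) : Q n x := by
  constructor
  · intro j k _ hj _
    exact h _ (List.mem_iff_getElem?.mpr ⟨j, hj⟩) rfl
  · rintro ⟨p, hp⟩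
    exact absurd rfl (h _ (List.mem_iff_getElem?.mpr ⟨p, hp⟩))

lemma fn_to_Q {n : ℕ} {u v : List Sig4} (hu : NoAmpL u) (hv : NoAmpL v)
    (hcond : ∀ w : List Bool, w.length = n → blk w <:+ v → blk w <:+: u) :
    Q n (u ++ Sig4.amp :: v) := by
  set x := u ++ Sig4.amp :: v with hxdef
  have hxlen : x.length = u.length + 1 + v.length := by
    rw [hxdef, List.length_append, List.length_cons]; omega
  have hamp : x[u.length]? = some Sig4.amp := dec_amp u v
  constructor
  · intro j k hjk hj hk
    rw [hxdef, amp_pos hu hv] at hj hk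
    omega
  · intro _ h3
    obtain ⟨hlen, hhead, hlast, hbits⟩ := h3
    have hvlen : n + 2 ≤ v.length := by
      by_contra hlt
      push_neg at hlt
      have h1 : x.length - (n+2) ≤ u.length := by omega
      have h2 : u.length ≤ x.length - 1 := by omega
      rcases Nat.eq_or_lt_of_le h1 with he | hl
      · rw [he] at hhead
        exact absurd (hamp.symm.trans hhead) (by simp)
      · rcases Nat.eq_or_lt_of_le h2 with he2 | hl2
        · rw [← he2] at hlast
          exact absurd (hamp.symm.trans hlast) (by simp)
        · have hi : u.length - (x.length - (n+2)) - 1 < n := by omega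
          have hpos : x.length - (n+2) + (1 + (u.length - (x.length - (n+2)) - 1))
              = u.length := by omega
          rcases hbits _ hi with hb | hb <;>
          · rw [hpos] at hb
            exact absurd (hamp.symm.trans hb) (by simp)
    set w : List Bool := (List.range n).map
      (fun i => decide (x[x.length - (n+2) + (1+i)]? = some Sig4.one)) with hwdef
    have hw : w.length = n := by simp [hwdef]
    have hwbit : ∀ i : ℕ, i < n → ∃ b : Bool, w[i]? = some b ∧
        x[x.length - (n+2) + (1+i)]? = some (bitSym b) := by
      intro i hi
      refine ⟨decide (x[x.length - (n+2) + (1+i)]? = some Sig4.one), ?_, ?_⟩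
      · rw [hwdef, List.getElem?_map, List.getElem?_range hi]
        rfl
      · rcases hbits i hi with hb | hb <;> rw [hb] <;> decide
    have hvx : ∀ q : ℕ, v[q]? = x[u.length + 1 + q]? := fun q => (dec_v u v q).symm
    have hkey : ∀ m : ℕ, m < n + 2 →
        x[x.length - (n+2) + m]? = v[v.length - (n+2) + m]? := by
      intro m hm
      rw [hvx, show x.length - (n+2) + m = u.length + 1 + (v.length - (n+2) + m)
        from by omega]
    have hdrop : v.drop (v.length - (n+2)) = blk w := by
      apply List.ext_getElem?
      intro m
      rw [List.getElem?_drop]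
      by_cases hm : m < n + 2
      · rw [← hkey m hm]
        by_cases hm0 : m = 0
        · subst hm0
          rw [Nat.add_zero, blk_zero]
          exact hhead
        · by_cases hmn : m = n + 1
          · subst hmn
            rw [show x.length - (n+2) + (n+1) = x.length - 1 from by omega,
              show n + 1 = w.length + 1 from by omega, blk_last]
            exact hlast
          · obtain ⟨i, hi, hmi⟩ : ∃ i, i < n ∧ m = 1 + i := ⟨m - 1, by omega, by omega⟩
            subst hmi
            obtain ⟨b, hb1, hb2⟩ := hwbit i hi
            rw [hb2, blk_bit hb1]
      · rw [blk_none (by omega), List.getElem?_eq_none (by omega)]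
    have hsuf : blk w <:+ v := by
      rw [← hdrop]; exact List.drop_suffix _ _
    obtain ⟨s, t, hst⟩ := hcond w hw hsuf
    have hulen : u.length = s.length + (n+2) + t.length := by
      rw [← hst, List.length_append, List.length_append, blk_length, hw]
    have hsl : (s ++ blk w).length = s.length + (n+2) := by
      rw [List.length_append, blk_length, hw]
    have hux : ∀ m : ℕ, m < n + 2 → x[s.length + m]? = (blk w)[m]? := by
      intro m hm
      have hmu : s.length + m < u.length := by omega
      have h1 : x[s.length + m]? = u[s.length + m]? := by
        rw [hxdef]; exact List.getElem?_append_left hmu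
      rw [h1, ← hst,
        List.getElem?_append_left (show s.length + m < (s ++ blk w).length from
          by rw [hsl]; omega),
        List.getElem?_append_right (Nat.le_add_right _ _),
        show s.length + m - s.length = m from by omega]
    refine ⟨s.length, ?_, ?_, ⟨u.length, by omega, hamp⟩, ?_⟩
    · have h0 := hux 0 (by omega)
      rw [Nat.add_zero] at h0
      rw [h0, blk_zero]
    · have h0 := hux (n+1) (by omega)
      rw [h0, show n + 1 = w.length + 1 from by omega, blk_last]
    · intro i hi
      have hbv := hux (1+i) (by omega)
      obtain ⟨b, hb1, hb2⟩ := hwbit i hi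
      rw [blk_bit hb1] at hbv
      cases b
      · right
        constructor
        · simpa [bitSym] using hbv
        · rw [hb2]; simp [bitSym]
      · left
        constructor
        · simpa [bitSym] using hbv
        · simpa [bitSym] using hb2

lemma Q_to_good {n : ℕ} {x : List Sig4} (h : Q n x) : x ∈ Fn n ∨ NoAmpL x := by
  obtain ⟨h1, h2⟩ := h
  by_cases hA : HasA x
  · left
    obtain ⟨p, hp⟩ := hA
    have hpL : p < x.length := lt_of_some hp
    obtain ⟨hlt, hget⟩ := List.getElem?_eq_some_iff.mp hp
    rw [Fn, Set.mem_setOf_eq]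
    refine ⟨x.take p, x.drop (p+1), ?_, ?_, ?_, ?_⟩
    · intro a ha
      obtain ⟨m, hm⟩ := List.mem_iff_getElem?.mp ha
      have hmlt : m < p := by
        have := lt_of_some hm
        rw [List.length_take] at this
        omega
      rw [List.getElem?_take, if_pos hmlt] at hm
      rintro rfl
      exact h1 m p hmlt hm hp
    · intro a ha
      obtain ⟨q, hq⟩ := List.mem_iff_getElem?.mp ha
      rw [List.getElem?_drop] at hq
      rintro rfl
      exact h1 p (p+1+q) (by omega) hp hq
    · conv_lhs => rw [← List.take_append_drop p x]
      congr 1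
      rw [← List.getElem_cons_drop hlt, hget]
    · intro w hw hsuf
      obtain ⟨s, hs⟩ := hsuf
      have hvq : ∀ q : ℕ, (x.drop (p+1))[q]? = x[p+1+q]? :=
        fun q => List.getElem?_drop ..
      have hvlen2 : (x.drop (p+1)).length = x.length - (p+1) := List.length_drop ..
      have hslen : n + 2 ≤ x.length - (p+1) := by
        have : (s ++ blk w).length = (x.drop (p+1)).length := by rw [hs]
        rw [List.length_append, blk_length, hw, hvlen2] at this
        omega
      have hsl : (s ++ blk w).length = s.length + (n+2) := by
        rw [List.length_append, blk_length, hw]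
      have hslen3 : s.length = x.length - (p+1) - (n+2) := by
        have : (s ++ blk w).length = (x.drop (p+1)).length := by rw [hs]
        rw [hsl, hvlen2] at this
        omega
      have hkey : ∀ m : ℕ, m < n + 2 → x[x.length - (n+2) + m]? = (blk w)[m]? := by
        intro m hm
        have e1 : x.length - (n+2) + m = p + 1 + ((x.drop (p+1)).length - (n+2) + m) := by
          rw [hvlen2]; omega
        rw [e1, ← hvq, ← hs]
        have hle : s.length ≤ (s ++ blk w).length - (n+2) + m := by
          rw [hsl]; omega
        rw [show (s ++ blk w).length = (x.drop (p+1)).length from by rw [hs]] at hle ⊢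
        rw [List.getElem?_append_right hle,
          show (x.drop (p+1)).length - (n+2) + m - s.length = m from by
            rw [hvlen2, hslen3]; omega]
      have h3 : P3 n x := by
        refine ⟨by omega, ?_, ?_, ?_⟩
        · have h0 := hkey 0 (by omega)
          rw [Nat.add_zero] at h0
          rw [h0, blk_zero]
        · have h0 := hkey (n+1) (by omega)
          rw [show x.length - (n+2) + (n+1) = x.length - 1 from by omega] at h0
          rw [h0, show n + 1 = w.length + 1 from by omega, blk_last]
        · intro i hi
          have h0 := hkey (1+i) (by omega)
          obtain ⟨b, hb⟩ := exists_get (show i < w.length from by omega) (l := w)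
          rw [blk_bit hb] at h0
          rw [h0]
          cases b
          · left; rfl
          · right; rfl
      obtain ⟨j, hj1, hj2, ⟨p', hp'1, hp'2⟩, hmatch⟩ := h2 ⟨p, hp⟩ h3
      have hpp : p' = p := by
        rcases lt_trichotomy p' p with hc | hc | hc
        · exact absurd hp (h1 p' p hc hp'2)
        · exact hc
        · exact absurd hp'2 (h1 p p' hc hp)
      have hjp : j + (n+1) < p := hpp ▸ hp'1
      have hext : List.take (n+2) (List.drop j (x.take p)) = blk w := by
        apply List.ext_getElem?
        intro m
        rw [List.getElem?_take]
        split_ifs with hm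
        · rw [List.getElem?_drop, List.getElem?_take, if_pos (show j + m < p by omega)]
          by_cases hm0 : m = 0
          · subst hm0
            rw [Nat.add_zero, hj1, blk_zero]
          · by_cases hmn : m = n + 1
            · subst hmn
              rw [hj2, show n + 1 = w.length + 1 from by omega, blk_last]
            · obtain ⟨i, hi, hmi⟩ : ∃ i, i < n ∧ m = 1 + i := ⟨m - 1, by omega, by omega⟩
              subst hmi
              obtain ⟨b, hb⟩ := exists_get (show i < w.length from by omega) (l := w)
              rw [blk_bit hb]
              have hkb := hkey (1+i) (by omega)
              rw [blk_bit hb] at hkb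
              rcases hmatch i hi with ⟨hx1, hx2⟩ | ⟨hx1, hx2⟩
              · cases b
                · have := hx2.symm.trans hkb
                  simp [bitSym] at this
                · simpa [bitSym] using hx1
              · cases b
                · simpa [bitSym] using hx1
                · exact absurd (by simpa [bitSym] using hkb) hx2
        · exact (blk_none (by omega)).symm
      rw [← hext]
      exact ((List.take_prefix _ _).isInfix).trans ((List.drop_suffix _ _).isInfix)
  · right
    intro a ha
    rintro rfl
    obtain ⟨m, hm⟩ := List.mem_iff_getElem?.mp ha
    exact hA ⟨m, hm⟩

end FnProof


/-- There is a constant c > 0 such that for every n ≥ 1 there is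
an LTLf formula φ_n over the propositions {0,1,#,&} of size at most c·n² whose
language is exactly the encoding of F_n ⊎ {0,1,#}^*: a nonempty finite trace
satisfies φ_n iff every letter makes exactly one proposition true (i.e. the
trace is the singleton-encoding of a word x over {0,1,#,&}) and x lies in F_n
or contains no occurrence of &. -/
theorem exists_small_formula_for_Fn :
    ∃ c : ℕ, 0 < c ∧ ∀ n : ℕ, 1 ≤ n →
      ∃ φ : LTLf Sig4, LTLf.size φ ≤ c * n ^ 2 ∧
        ∀ ρ : List (Set Sig4), ρ ≠ [] →
          (LTLf.Sat φ ρ ↔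
            ∃ x : List Sig4, ρ = x.map (fun a => ({a} : Set Sig4)) ∧
              (x ∈ Fn n ∨ NoAmpL x)) := by
  refine ⟨200, by norm_num, fun n hn => ⟨FnProof.phi n, FnProof.size_phi_le hn,
    fun ρ _ => ?_⟩⟩
  constructor
  · intro hsat
    have hsat' := hsat
    obtain ⟨ha, -⟩ := hsat'
    obtain ⟨x, rfl⟩ := FnProof.encode_exists ha
    exact ⟨x, rfl, FnProof.Q_to_good (FnProof.sat_phi_enc.mp hsat)⟩
  · rintro ⟨x, rfl, hg⟩
    apply FnProof.sat_phi_enc.mpr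
    rcases hg with hfn | hno
    · obtain ⟨u, v, hu, hv, hx, hcond⟩ := hfn
      subst hx
      exact FnProof.fn_to_Q hu hv hcond
    · exact FnProof.noamp_to_Q hno
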